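/- arXiv:1801.06849 — 2 statements merged into one kernel-verified Lean document; each statement's English description precedes it below -/
import Mathlib

section
/- Let A ⊆ ℝⁿ and B ⊆ ℝᵐ be subsets with 0 ∈ A and 0 ∈ B, and suppose there exists a bi-Lipschitz homeomorphism h : A → B (with respect to the outer metrics, i.e. the Euclidean distances restricted to A and B) with h(0) = 0. Then there exists a bi-Lipschitz homeomorphism Φ : ℝⁿ × ℝᵐ → ℝⁿ × ℝᵐ such that Φ(A × {0}) = {0} × B and Φ(0,0) = (0,0). In other words, (A × {0}, 0) and ({0} × B, 0) are ambient bi-Lipschitz equivalent in ℝⁿ⁺ᵐ. -/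
/-!
Extend `h` and `h⁻¹` to Lipschitz maps `H : ℝⁿ → ℝᵐ` and `G : ℝᵐ → ℝⁿ` (McShane's extension,
coordinate by coordinate). The shears `(x, y) ↦ (x, y + H x)` and `(x, y) ↦ (x - G y, y)` are
bi-Lipschitz, their inverses being the opposite shears, and their composite sends `(a, 0)` to
`(a - G (h a), h a) = (0, h a)` for every `a ∈ A`.
-/

open Set
open scoped NNReal ENNReal

theorem Equiv.image_trans_trans_symm_preimage {α β : Type*} (e : α ≃ β) (f : β ≃ β)
    (s : Set β) : e.trans (f.trans e.symm) '' (e ⁻¹' s) = e ⁻¹' (f '' s) := by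
  rw [image_eq_preimage_symm, image_eq_preimage_symm]
  ext
  simp

section BiLipschitz

variable {α β γ : Type*} [PseudoEMetricSpace α] [PseudoEMetricSpace β] [PseudoEMetricSpace γ]

def Equiv.IsBiLipschitz (e : α ≃ β) : Prop :=
  (∃ K, LipschitzWith K e) ∧ ∃ K, LipschitzWith K e.symm

theorem Equiv.IsBiLipschitz.trans {e : α ≃ β} {f : β ≃ γ} (he : e.IsBiLipschitz)
    (hf : f.IsBiLipschitz) : (e.trans f).IsBiLipschitz := by
  obtain ⟨⟨_, he₁⟩, _, he₂⟩ := he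
  obtain ⟨⟨_, hf₁⟩, _, hf₂⟩ := hf
  exact ⟨⟨_, hf₁.comp he₁⟩, _, he₂.comp hf₂⟩

theorem Equiv.IsBiLipschitz.symm {e : α ≃ β} (he : e.IsBiLipschitz) : e.symm.IsBiLipschitz :=
  ⟨he.2, he.1⟩

theorem WithLp.isBiLipschitz_equiv_prod (p : ℝ≥0∞) [Fact (1 ≤ p)] :
    (WithLp.equiv p (α × β)).IsBiLipschitz :=
  ⟨⟨_, WithLp.prod_lipschitzWith_ofLp p α β⟩, _, WithLp.prod_lipschitzWith_toLp p α β⟩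

end BiLipschitz

theorem Equiv.isBiLipschitz_iff_exists_two_sided_bound {α β : Type*} [PseudoMetricSpace α]
    [PseudoMetricSpace β] {e : α ≃ β} :
    e.IsBiLipschitz ↔ ∃ L : ℝ, 1 ≤ L ∧ ∀ x y, (1 / L) * dist x y ≤ dist (e x) (e y) ∧
      dist (e x) (e y) ≤ L * dist x y := by
  constructor
  · rintro ⟨⟨K, hK⟩, K', hK'⟩
    have hL : 0 < max (max (K : ℝ) K') 1 := lt_max_of_lt_right one_pos
    refine ⟨max (max K K') 1, le_max_right _ _, fun x y => ⟨?_, ?_⟩⟩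
    · rw [one_div, inv_mul_le_iff₀ hL]
      calc dist x y = dist (e.symm (e x)) (e.symm (e y)) := by simp
        _ ≤ K' * dist (e x) (e y) := hK'.dist_le_mul _ _
        _ ≤ _ := by gcongr; exact (le_max_right _ _).trans (le_max_left _ _)
    · calc dist (e x) (e y) ≤ K * dist x y := hK.dist_le_mul _ _
        _ ≤ _ := by gcongr; exact (le_max_left _ _).trans (le_max_left _ _)
  · rintro ⟨L, hL, hbound⟩
    have hL₀ : 0 < L := one_pos.trans_le hL
    refine ⟨⟨L.toNNReal, .of_dist_le_mul fun x y => ?_⟩, L.toNNReal, .of_dist_le_mul fun x y => ?_⟩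
    · simpa [hL₀.le] using (hbound x y).2
    · have hlower := (hbound (e.symm x) (e.symm y)).1
      rw [one_div, inv_mul_le_iff₀ hL₀, e.apply_symm_apply, e.apply_symm_apply] at hlower
      simpa [hL₀.le] using hlower

namespace Equiv

variable {E F : Type*}

def shearSnd [AddGroup F] (f : E → F) : E × F ≃ E × F where
  toFun p := (p.1, p.2 + f p.1)
  invFun p := (p.1, p.2 - f p.1)
  left_inv p := by simp
  right_inv p := by simp

def shearFst [AddGroup E] (g : F → E) : E × F ≃ E × F where
  toFun p := (p.1 + g p.2, p.2)
  invFun p := (p.1 - g p.2, p.2)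
  left_inv p := by simp
  right_inv p := by simp

@[simp]
theorem shearSnd_apply [AddGroup F] (f : E → F) (p : E × F) :
    shearSnd f p = (p.1, p.2 + f p.1) := rfl

@[simp]
theorem shearFst_apply [AddGroup E] (g : F → E) (p : E × F) :
    shearFst g p = (p.1 + g p.2, p.2) := rfl

theorem shearSnd_symm [AddGroup F] (f : E → F) : (shearSnd f).symm = shearSnd (-f) := by
  ext p <;> simp [shearSnd, sub_eq_add_neg]

theorem shearFst_symm [AddGroup E] (g : F → E) : (shearFst g).symm = shearFst (-g) := by
  ext p <;> simp [shearFst, sub_eq_add_neg]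

theorem shearSnd_trans_shearFst_neg_apply_mk_zero [AddGroup E] [AddGroup F] (H : E → F)
    (G : F → E) (x : E) : (shearSnd H).trans (shearFst (-G)) (x, 0) = (x - G (H x), H x) := by
  simp [sub_eq_add_neg]

theorem image_shearSnd_trans_shearFst_neg_prod_zero [AddGroup E] [AddGroup F] {A : Set E}
    {H : E → F} {G : F → E} (hGH : ∀ a ∈ A, G (H a) = a) :
    (shearSnd H).trans (shearFst (-G)) '' (A ×ˢ {0}) = {0} ×ˢ (H '' A) := by
  rw [prod_singleton, singleton_prod, image_image, image_image]
  refine image_congr fun a ha => ?_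
  rw [shearSnd_trans_shearFst_neg_apply_mk_zero, hGH a ha, sub_self]

variable [SeminormedAddCommGroup E] [SeminormedAddCommGroup F] {K : ℝ≥0}

theorem lipschitzWith_shearSnd {f : E → F} (hf : LipschitzWith K f) :
    LipschitzWith (1 + K) (shearSnd f) :=
  (LipschitzWith.prod_fst.prodMk
    (LipschitzWith.prod_snd.add (hf.comp LipschitzWith.prod_fst))).weaken (by simp)

theorem lipschitzWith_shearFst {g : F → E} (hg : LipschitzWith K g) :
    LipschitzWith (1 + K) (shearFst g) :=
  ((LipschitzWith.prod_fst.add (hg.comp LipschitzWith.prod_snd)).prodMk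
    LipschitzWith.prod_snd).weaken (by simp)

theorem isBiLipschitz_shearSnd {f : E → F} (hf : LipschitzWith K f) : (shearSnd f).IsBiLipschitz :=
  ⟨⟨_, lipschitzWith_shearSnd hf⟩, _, shearSnd_symm f ▸ lipschitzWith_shearSnd hf.neg⟩

theorem isBiLipschitz_shearFst {g : F → E} (hg : LipschitzWith K g) : (shearFst g).IsBiLipschitz :=
  ⟨⟨_, lipschitzWith_shearFst hg⟩, _, shearFst_symm g ▸ lipschitzWith_shearFst hg.neg⟩

end Equiv

theorem LipschitzWith.exists_lipschitzWith_extension_euclideanSpace {α ι : Type*}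
    [PseudoMetricSpace α] [Fintype ι] {s : Set α} {K : ℝ≥0} {f : s → EuclideanSpace ℝ ι}
    (hf : LipschitzWith K f) :
    ∃ g : α → EuclideanSpace ℝ ι, (∃ K', LipschitzWith K' g) ∧ ∀ x : s, g x = f x := by
  set f' : α → EuclideanSpace ℝ ι := Function.extend (↑) f 0
  have hf' : ∀ x : s, f' x = f x := Subtype.val_injective.extend_apply f 0
  have : LipschitzOnWith K f' s :=
    lipschitzOnWith_iff_restrict.2 ((funext hf' : s.domRestrict f' = f) ▸ hf)
  obtain ⟨g, hg, hfg⟩ :=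
    ((PiLp.lipschitzWith_ofLp 2 fun _ : ι => ℝ).comp_lipschitzOnWith this).extend_pi
  refine ⟨fun x => WithLp.toLp 2 (g x), ⟨_, (PiLp.lipschitzWith_toLp 2 _).comp hg⟩, fun x => ?_⟩
  simp [← hfg x.2, hf']

theorem ambient_biLipschitz_of_biLipschitz_general
    {n m : ℕ} (A : Set (EuclideanSpace ℝ (Fin n))) (B : Set (EuclideanSpace ℝ (Fin m)))
    (hA : (0 : EuclideanSpace ℝ (Fin n)) ∈ A)
    (h : A → B) (hbij : Function.Bijective h)
    (K : ℝ) (hK : 1 ≤ K)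
    (hlip : ∀ x y : A, (1 / K) * dist (x : EuclideanSpace ℝ (Fin n)) (y : EuclideanSpace ℝ (Fin n)) ≤
        dist (h x : EuclideanSpace ℝ (Fin m)) (h y : EuclideanSpace ℝ (Fin m)) ∧
      dist (h x : EuclideanSpace ℝ (Fin m)) (h y : EuclideanSpace ℝ (Fin m)) ≤
        K * dist (x : EuclideanSpace ℝ (Fin n)) (y : EuclideanSpace ℝ (Fin n)))
    (h0 : (h ⟨0, hA⟩ : EuclideanSpace ℝ (Fin m)) = 0) :
    ∃ Φ : WithLp 2 (EuclideanSpace ℝ (Fin n) × EuclideanSpace ℝ (Fin m)) →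
          WithLp 2 (EuclideanSpace ℝ (Fin n) × EuclideanSpace ℝ (Fin m)),
      Function.Bijective Φ ∧
      (∃ L : ℝ, 1 ≤ L ∧ ∀ p q, (1 / L) * dist p q ≤ dist (Φ p) (Φ q) ∧
        dist (Φ p) (Φ q) ≤ L * dist p q) ∧
      Φ '' {p | (WithLp.equiv 2 _ p).1 ∈ A ∧ (WithLp.equiv 2 _ p).2 = 0} =
        {p | (WithLp.equiv 2 _ p).1 = 0 ∧ (WithLp.equiv 2 _ p).2 ∈ B} ∧
      Φ ((WithLp.equiv 2 _).symm (0, 0)) = (WithLp.equiv 2 _).symm (0, 0) := by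
  set e := Equiv.ofBijective h hbij
  obtain ⟨⟨_, he₁⟩, _, he₂⟩ : e.IsBiLipschitz :=
    Equiv.isBiLipschitz_iff_exists_two_sided_bound.2 ⟨K, hK, hlip⟩
  obtain ⟨H, ⟨_, hH⟩, hH_ext⟩ :=
    ((LipschitzWith.subtype_val B).comp he₁).exists_lipschitzWith_extension_euclideanSpace
  obtain ⟨G, ⟨_, hG⟩, hG_ext⟩ :=
    ((LipschitzWith.subtype_val A).comp he₂).exists_lipschitzWith_extension_euclideanSpace
  have hGH : ∀ a ∈ A, G (H a) = a := fun a ha => by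
    simpa [hH_ext ⟨a, ha⟩, e] using hG_ext (e ⟨a, ha⟩)
  have hH_image : H '' A = B := by
    rw [image_eq_range, funext hH_ext, range_comp, e.range_eq_univ, image_univ, Subtype.range_coe]
  have hH0 : H 0 = 0 := (hH_ext ⟨0, hA⟩).trans h0
  set P := WithLp.equiv 2 (EuclideanSpace ℝ (Fin n) × EuclideanSpace ℝ (Fin m))
  set Φ₀ := (Equiv.shearSnd H).trans (Equiv.shearFst (-G))
  refine ⟨P.trans (Φ₀.trans P.symm), Equiv.bijective _,
    Equiv.isBiLipschitz_iff_exists_two_sided_bound.1 ?_, ?_, ?_⟩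
  · exact (WithLp.isBiLipschitz_equiv_prod 2).trans (((Equiv.isBiLipschitz_shearSnd hH).trans
      (Equiv.isBiLipschitz_shearFst hG.neg)).trans (WithLp.isBiLipschitz_equiv_prod 2).symm)
  · change _ '' (P ⁻¹' (A ×ˢ {0})) = P ⁻¹' ({0} ×ˢ B)
    rw [Equiv.image_trans_trans_symm_preimage,
      Equiv.image_shearSnd_trans_shearFst_neg_prod_zero hGH, hH_image]
  · change P.symm (Φ₀ (P (P.symm (0, 0)))) = _
    rw [P.apply_symm_apply, Equiv.shearSnd_trans_shearFst_neg_apply_mk_zero, hGH 0 hA, hH0,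
      sub_zero]

/-- If `A ⊆ ℝⁿ`, `B ⊆ ℝᵐ` contain the origin and there is a bi-Lipschitz homeomorphism
`h : A → B` (for the outer metrics) with `h 0 = 0`, then there is a bi-Lipschitz
homeomorphism `Φ` of `ℝⁿ × ℝᵐ = ℝ^{n+m}` (with the Euclidean, i.e. `L²`, product metric)
onto itself with `Φ (A × {0}) = {0} × B` and `Φ (0, 0) = (0, 0)`: the germs `(A × {0}, 0)`
and `({0} × B, 0)` are ambient bi-Lipschitz equivalent in `ℝ^{n+m}`. -/
theorem ambient_biLipschitz_of_biLipschitz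
    {n m : ℕ} (A : Set (EuclideanSpace ℝ (Fin n))) (B : Set (EuclideanSpace ℝ (Fin m)))
    (hA : (0 : EuclideanSpace ℝ (Fin n)) ∈ A) (hB : (0 : EuclideanSpace ℝ (Fin m)) ∈ B)
    (h : A → B) (hbij : Function.Bijective h)
    (K : ℝ) (hK : 1 ≤ K)
    (hlip : ∀ x y : A, (1 / K) * dist (x : EuclideanSpace ℝ (Fin n)) (y : EuclideanSpace ℝ (Fin n)) ≤
        dist (h x : EuclideanSpace ℝ (Fin m)) (h y : EuclideanSpace ℝ (Fin m)) ∧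
      dist (h x : EuclideanSpace ℝ (Fin m)) (h y : EuclideanSpace ℝ (Fin m)) ≤
        K * dist (x : EuclideanSpace ℝ (Fin n)) (y : EuclideanSpace ℝ (Fin n)))
    (h0 : (h ⟨0, hA⟩ : EuclideanSpace ℝ (Fin m)) = 0) :
    ∃ Φ : WithLp 2 (EuclideanSpace ℝ (Fin n) × EuclideanSpace ℝ (Fin m)) →
          WithLp 2 (EuclideanSpace ℝ (Fin n) × EuclideanSpace ℝ (Fin m)),
      Function.Bijective Φ ∧
      (∃ L : ℝ, 1 ≤ L ∧ ∀ p q, (1 / L) * dist p q ≤ dist (Φ p) (Φ q) ∧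
        dist (Φ p) (Φ q) ≤ L * dist p q) ∧
      Φ '' {p | (WithLp.equiv 2 _ p).1 ∈ A ∧ (WithLp.equiv 2 _ p).2 = 0} =
        {p | (WithLp.equiv 2 _ p).1 = 0 ∧ (WithLp.equiv 2 _ p).2 ∈ B} ∧
      Φ ((WithLp.equiv 2 _).symm (0, 0)) = (WithLp.equiv 2 _).symm (0, 0) :=
  ambient_biLipschitz_of_biLipschitz_general A B hA h hbij K hK hlip h0
end

section
/- Let E and F be real normed vector spaces, let S be a subset of the unit sphere of E and S' a subset of the unit sphere of F, and let h : S → S' be a bijection for which there is K ≥ 1 with (1/K)·‖x − y‖ ≤ ‖h(x) − h(y)‖ ≤ K·‖x − y‖ for all x, y ∈ S. Define the cone Cone(S) = {t·x : t ∈ [0,∞), x ∈ S} and similarly Cone(S'), and define H : Cone(S) → Cone(S') by H(0) = 0 and H(v) = ‖v‖ · h(v/‖v‖) for v ≠ 0. Then H is a well-defined bijection from Cone(S) onto Cone(S'), and H is bi-Lipschitz: there exists a constant L ≥ 1 with (1/L)·‖v − w‖ ≤ ‖H(v) − H(w)‖ ≤ L·‖v − w‖ for all v, w ∈ Cone(S).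 -/
/-!
On the cone, `H (s • a) = s • h a` for `s ≥ 0` and `a` in the link. For unit vectors `a, b`, the
distance `‖s • a - t • b‖` bounds both the radial part `|s - t|` and, up to a factor `2`, the
angular part `t * ‖a - b‖`; since `‖s • c - t • d‖ ≤ |s - t| + t * ‖c - d‖` when `‖c‖ = 1`, this
gives `‖H v - H w‖ ≤ (1 + 2 K) * ‖v - w‖`. Exchanging the roles of `a, b` and `h a, h b` gives the
lower bound, and with it injectivity.
-/

open Set

section

variable {E F : Type*} [NormedAddCommGroup E] [NormedSpace ℝ E]
  [NormedAddCommGroup F] [NormedSpace ℝ F]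

def Set.cone (S : Set E) : Set E := {v | ∃ t : ℝ, 0 ≤ t ∧ ∃ x ∈ S, v = t • x}

noncomputable def radialExtension (g : E → F) (v : E) : F := ‖v‖ • g (‖v‖⁻¹ • v)

section UnitVectors

variable {a b : E} {s t : ℝ}

lemma abs_sub_le_norm_smul_sub_smul (ha : ‖a‖ = 1) (hb : ‖b‖ = 1) (hs : 0 ≤ s) (ht : 0 ≤ t) :
    |s - t| ≤ ‖s • a - t • b‖ := by
  simpa [norm_smul_of_nonneg hs, norm_smul_of_nonneg ht, ha, hb] using
    abs_norm_sub_norm_le (s • a) (t • b)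

lemma mul_norm_sub_le_two_mul_norm_smul_sub_smul (ha : ‖a‖ = 1) (hb : ‖b‖ = 1) (hs : 0 ≤ s)
    (ht : 0 ≤ t) : t * ‖a - b‖ ≤ 2 * ‖s • a - t • b‖ := by
  have hradial := abs_sub_le_norm_smul_sub_smul ha hb hs ht
  calc t * ‖a - b‖ = ‖(t - s) • a + (s • a - t • b)‖ := by
        rw [← norm_smul_of_nonneg ht, smul_sub, sub_smul]; abel_nf
    _ ≤ |s - t| + ‖s • a - t • b‖ := by
        grw [norm_add_le, norm_smul, ha, Real.norm_eq_abs, abs_sub_comm, mul_one]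
    _ ≤ 2 * ‖s • a - t • b‖ := by linarith

lemma norm_smul_sub_smul_le {c d : F} {K : ℝ} (ha : ‖a‖ = 1) (hb : ‖b‖ = 1) (hc : ‖c‖ = 1)
    (hs : 0 ≤ s) (ht : 0 ≤ t) (hK : 0 ≤ K) (hcd : ‖c - d‖ ≤ K * ‖a - b‖) :
    ‖s • c - t • d‖ ≤ (1 + 2 * K) * ‖s • a - t • b‖ := by
  have hradial := abs_sub_le_norm_smul_sub_smul ha hb hs ht
  have hangular := mul_norm_sub_le_two_mul_norm_smul_sub_smul ha hb hs ht
  calc ‖s • c - t • d‖ = ‖(s - t) • c + t • (c - d)‖ := by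
        rw [smul_sub, sub_smul]; abel_nf
    _ ≤ |s - t| + t * ‖c - d‖ := by
        grw [norm_add_le, norm_smul, norm_smul_of_nonneg ht, hc, Real.norm_eq_abs, mul_one]
    _ ≤ |s - t| + K * (t * ‖a - b‖) := by
        grw [hcd]; linarith
    _ ≤ (1 + 2 * K) * ‖s • a - t • b‖ := by nlinarith

end UnitVectors

section Cone

variable {S : Set E} {v w : E}

lemma Set.eq_norm_smul_of_mem_cone (hS : ∀ x ∈ S, ‖x‖ = 1) (hv : v ∈ S.cone) :
    ∃ x ∈ S, v = ‖v‖ • x := by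
  obtain ⟨t, ht, x, hx, rfl⟩ := hv
  exact ⟨x, hx, by rw [norm_smul_of_nonneg ht, hS x hx, mul_one]⟩

lemma Set.inv_norm_smul_mem_of_mem_cone (hS : ∀ x ∈ S, ‖x‖ = 1) (hv : v ∈ S.cone)
    (hv0 : v ≠ 0) : ‖v‖⁻¹ • v ∈ S := by
  obtain ⟨x, hx, hvx⟩ := S.eq_norm_smul_of_mem_cone hS hv
  rwa [(inv_smul_eq_iff₀ (norm_ne_zero_iff.2 hv0)).2 hvx]

variable {S' : Set F} {g : E → F}

@[simp]
lemma radialExtension_zero : radialExtension g 0 = 0 := by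
  simp [radialExtension]

lemma radialExtension_smul {x : E} {t : ℝ} (hx : ‖x‖ = 1) (ht : 0 ≤ t) :
    radialExtension g (t • x) = t • g x := by
  rcases ht.eq_or_lt with rfl | htpos
  · simp
  · rw [radialExtension, norm_smul_of_nonneg ht, hx, mul_one, smul_smul,
      inv_mul_cancel₀ htpos.ne', one_smul]

lemma radialExtension_of_mem_cone (hS : ∀ x ∈ S, ‖x‖ = 1) (hv : v ∈ S.cone) :
    ∃ x ∈ S, v = ‖v‖ • x ∧ radialExtension g v = ‖v‖ • g x := by
  obtain ⟨x, hx, hvx⟩ := S.eq_norm_smul_of_mem_cone hS hv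
  exact ⟨x, hx, hvx, by rw [hvx, radialExtension_smul (hS x hx) (norm_nonneg _), ← hvx]⟩

lemma mapsTo_radialExtension_cone (hS : ∀ x ∈ S, ‖x‖ = 1) (hg : MapsTo g S S') :
    MapsTo (radialExtension g) S.cone S'.cone := fun v hv => by
  obtain ⟨x, hx, -, hgv⟩ := radialExtension_of_mem_cone (g := g) hS hv
  exact ⟨‖v‖, norm_nonneg v, g x, hg hx, hgv⟩

lemma surjOn_radialExtension_cone (hS : ∀ x ∈ S, ‖x‖ = 1) (hg : SurjOn g S S') :
    SurjOn (radialExtension g) S.cone S'.cone := by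
  rintro _ ⟨t, ht, _, hy, rfl⟩
  obtain ⟨x, hx, rfl⟩ := hg hy
  exact ⟨t • x, ⟨t, ht, x, hx, rfl⟩, radialExtension_smul (hS x hx) ht⟩

lemma norm_radialExtension_sub_le {K : ℝ} (hS : ∀ x ∈ S, ‖x‖ = 1)
    (hgS : ∀ x ∈ S, ‖g x‖ = 1) (hK : 0 ≤ K)
    (hg : ∀ x ∈ S, ∀ y ∈ S, ‖g x - g y‖ ≤ K * ‖x - y‖) (hv : v ∈ S.cone) (hw : w ∈ S.cone) :
    ‖radialExtension g v - radialExtension g w‖ ≤ (1 + 2 * K) * ‖v - w‖ := by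
  obtain ⟨a, ha, hva, hgv⟩ := radialExtension_of_mem_cone (g := g) hS hv
  obtain ⟨b, hb, hwb, hgw⟩ := radialExtension_of_mem_cone (g := g) hS hw
  rw [hgv, hgw]
  nth_rw 2 [hva, hwb]
  exact norm_smul_sub_smul_le (hS a ha) (hS b hb) (hgS a ha) (norm_nonneg v) (norm_nonneg w) hK
    (hg a ha b hb)

lemma norm_sub_le_radialExtension_sub {K : ℝ} (hS : ∀ x ∈ S, ‖x‖ = 1)
    (hgS : ∀ x ∈ S, ‖g x‖ = 1) (hK : 0 ≤ K)
    (hg : ∀ x ∈ S, ∀ y ∈ S, ‖x - y‖ ≤ K * ‖g x - g y‖) (hv : v ∈ S.cone) (hw : w ∈ S.cone) :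
    ‖v - w‖ ≤ (1 + 2 * K) * ‖radialExtension g v - radialExtension g w‖ := by
  obtain ⟨a, ha, hva, hgv⟩ := radialExtension_of_mem_cone (g := g) hS hv
  obtain ⟨b, hb, hwb, hgw⟩ := radialExtension_of_mem_cone (g := g) hS hw
  rw [hgv, hgw]
  nth_rw 1 [hva, hwb]
  exact norm_smul_sub_smul_le (hgS a ha) (hgS b hb) (hS a ha) (norm_nonneg v) (norm_nonneg w) hK
    (hg a ha b hb)

lemma injOn_radialExtension_cone {K : ℝ} (hS : ∀ x ∈ S, ‖x‖ = 1)
    (hgS : ∀ x ∈ S, ‖g x‖ = 1) (hK : 0 ≤ K)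
    (hg : ∀ x ∈ S, ∀ y ∈ S, ‖x - y‖ ≤ K * ‖g x - g y‖) :
    InjOn (radialExtension g) S.cone := fun v hv w hw hvw => by
  have := norm_sub_le_radialExtension_sub hS hgS hK hg hv hw
  rwa [hvw, sub_self, norm_zero, mul_zero, norm_le_zero_iff, sub_eq_zero] at this

end Cone

end

/-- A bi-Lipschitz homeomorphism `h` between subsets `S`, `S'` of the unit spheres of real
normed spaces `E`, `F` induces a well-defined bi-Lipschitz bijection `H` between the cones
`Cone S = {t • x : t ≥ 0, x ∈ S}` and `Cone S'`, given by `H 0 = 0` and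
`H v = ‖v‖ • h (‖v‖⁻¹ • v)` for `v ≠ 0`. -/
theorem cone_of_biLipschitz_link
    {E F : Type*} [NormedAddCommGroup E] [NormedSpace ℝ E]
    [NormedAddCommGroup F] [NormedSpace ℝ F]
    (S : Set E) (S' : Set F)
    (hS : ∀ x ∈ S, ‖x‖ = 1) (hS' : ∀ y ∈ S', ‖y‖ = 1)
    (h : S → S') (hbij : Function.Bijective h)
    (K : ℝ) (hK : 1 ≤ K)
    (hlip : ∀ x y : S, (1 / K) * ‖(x : E) - (y : E)‖ ≤ ‖(h x : F) - (h y : F)‖ ∧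
      ‖(h x : F) - (h y : F)‖ ≤ K * ‖(x : E) - (y : E)‖)
    (coneS : Set E) (hconeS : coneS = {v : E | ∃ t : ℝ, 0 ≤ t ∧ ∃ x ∈ S, v = t • x})
    (coneS' : Set F) (hconeS' : coneS' = {w : F | ∃ t : ℝ, 0 ≤ t ∧ ∃ y ∈ S', w = t • y}) :
    -- well-definedness: every nonzero point of the cone, normalized, lies in the link
    (∀ v ∈ coneS, v ≠ 0 → ‖v‖⁻¹ • v ∈ S) ∧
    ∃ H : coneS → coneS',
      Function.Bijective H ∧
      (∀ v : coneS, (v : E) = 0 → (H v : F) = 0) ∧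
      (∀ (v : coneS) (hv : (v : E) ≠ 0) (hm : ‖(v : E)‖⁻¹ • (v : E) ∈ S),
        (H v : F) = ‖(v : E)‖ • (h ⟨‖(v : E)‖⁻¹ • (v : E), hm⟩ : F)) ∧
      ∃ L : ℝ, 1 ≤ L ∧ ∀ v w : coneS,
        (1 / L) * ‖(v : E) - (w : E)‖ ≤ ‖(H v : F) - (H w : F)‖ ∧
        ‖(H v : F) - (H w : F)‖ ≤ L * ‖(v : E) - (w : E)‖ := by
  subst hconeS hconeS'
  set g : E → F := Function.extend Subtype.val (fun x : S => (h x : F)) 0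
  have hg (x : S) : g x = h x := Subtype.val_injective.extend_apply _ _ x
  have hgS (x) (hx : x ∈ S) : ‖g x‖ = 1 := hg ⟨x, hx⟩ ▸ hS' _ (h _).2
  have hmaps : MapsTo g S S' := fun x hx => hg ⟨x, hx⟩ ▸ (h _).2
  have hsurj : SurjOn g S S' := fun y hy => by
    obtain ⟨x, hx⟩ := hbij.2 ⟨y, hy⟩
    exact ⟨x, x.2, by rw [hg, hx]⟩
  have hupper (x) (hx : x ∈ S) (y) (hy : y ∈ S) : ‖g x - g y‖ ≤ K * ‖x - y‖ := by
    simpa only [hg ⟨x, hx⟩, hg ⟨y, hy⟩] using (hlip ⟨x, hx⟩ ⟨y, hy⟩).2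
  have hlower (x) (hx : x ∈ S) (y) (hy : y ∈ S) : ‖x - y‖ ≤ K * ‖g x - g y‖ := by
    have := (hlip ⟨x, hx⟩ ⟨y, hy⟩).1
    rwa [one_div_mul_eq_div, div_le_iff₀' (by linarith), ← hg ⟨x, hx⟩, ← hg ⟨y, hy⟩] at this
  have hK0 : 0 ≤ K := by linarith
  have hbijOn : BijOn (radialExtension g) S.cone S'.cone :=
    ⟨mapsTo_radialExtension_cone hS hmaps, injOn_radialExtension_cone hS hgS hK0 hlower,
      surjOn_radialExtension_cone hS hsurj⟩
  refine ⟨fun v hv hv0 => S.inv_norm_smul_mem_of_mem_cone hS hv hv0, hbijOn.mapsTo.restrict,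
    hbijOn.bijective, fun v hv => (congrArg (radialExtension g) hv).trans radialExtension_zero,
    fun v _ hm => congrArg (‖(v : E)‖ • ·) (hg ⟨_, hm⟩),
    1 + 2 * K, by linarith, fun v w => ⟨?_, norm_radialExtension_sub_le hS hgS hK0 hupper v.2 w.2⟩⟩
  rw [one_div_mul_eq_div, div_le_iff₀' (by linarith)]
  exact norm_sub_le_radialExtension_sub hS hgS hK0 hlower v.2 w.2
end
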